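/- For the conjugate-coordinate system of Appell's F₂ with a = −(1−γ₂+β₂)/(s−t), q = s(s−1)/(t(t−1)), and m as specified, the positive Weingarten invariant W⁺ = 2q²·∂_s a − q·∂_t m + m·∂_t q vanishes identically; likewise with b = −(β₂−1)/(s−t) and n as specified, W⁻ = 2∂_t b − ∂_s n vanishes identically. Hence both line congruences for F₂ are W-congruences for all parameter values. -/

import Mathlib

/-!
Every coefficient is a rational function whose only poles lie on `t = 0`, `t = 1` and `s = t`,
so its partial derivatives follow from the quotient rule. Substituting them into `W⁺` and `W⁻`
and clearing the common denominator `t (t - 1) (s - t)` leaves polynomial identities in `s`, `t`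
and the parameters.
-/

noncomputable def pdx (u : ℝ → ℝ → ℝ) : ℝ → ℝ → ℝ := fun x y => deriv (fun x' => u x' y) x
noncomputable def pdy (u : ℝ → ℝ → ℝ) : ℝ → ℝ → ℝ := fun x y => deriv (fun y' => u x y') y

section Derivatives

variable {𝕜 : Type*} [NontriviallyNormedField 𝕜] {s t : 𝕜}

theorem hasDerivAt_mul_sub_one : HasDerivAt (fun y => y * (y - 1)) (2 * t - 1) t :=
  ((hasDerivAt_id' t).fun_mul ((hasDerivAt_id' t).sub_const 1)).congr_deriv (by ring)

theorem hasDerivAt_mul_sub_one_mul_sub :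
    HasDerivAt (fun y => y * (y - 1) * (s - y)) ((2 * t - 1) * (s - t) - t * (t - 1)) t :=
  (hasDerivAt_mul_sub_one.fun_mul ((hasDerivAt_id' t).const_sub s)).congr_deriv (by ring)

theorem mul_sub_one_mul_sub_ne_zero (ht0 : t ≠ 0) (ht1 : t ≠ 1) (hst : s ≠ t) :
    t * (t - 1) * (s - t) ≠ 0 :=
  mul_ne_zero (mul_ne_zero ht0 (sub_ne_zero.mpr ht1)) (sub_ne_zero.mpr hst)

end Derivatives

namespace AppellF2

noncomputable def a (β₂ γ₂ s t : ℝ) : ℝ := -(1 - γ₂ + β₂) / (s - t)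

noncomputable def b (β₂ s t : ℝ) : ℝ := -(β₂ - 1) / (s - t)

noncomputable def q (s t : ℝ) : ℝ := s * (s - 1) / (t * (t - 1))

noncomputable def m (α β₁ β₂ γ₁ γ₂ s t : ℝ) : ℝ :=
  ((2 * α - γ₁ - 2 * γ₂ + 4) * s ^ 2 + (-2 * α + 2 * β₂ + γ₁ - 2) * s * t
    + (-α + β₁ - β₂ + 2 * γ₂ - 3) * s + (α - β₁ - β₂ + 1) * t)
    / (t * (t - 1) * (s - t))

noncomputable def n (α β₁ β₂ γ₁ γ₂ s t : ℝ) : ℝ :=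
  ((2 * α + 2 * β₂ - γ₁ - 2 * γ₂ + 2) * s * t + (-α + β₁ - β₂ + γ₂ - 1) * s
    + (-2 * α + γ₁ + 2 * γ₂ - 4) * t ^ 2 + (α - β₁ - β₂ - γ₂ + 3) * t)
    / (t * (t - 1) * (s - t))

noncomputable def weingartenPlus (a q m : ℝ → ℝ → ℝ) (s t : ℝ) : ℝ :=
  2 * q s t ^ 2 * pdx a s t - q s t * pdy m s t + m s t * pdy q s t

noncomputable def weingartenMinus (b n : ℝ → ℝ → ℝ) (s t : ℝ) : ℝ :=
  2 * pdy b s t - pdx n s t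

variable {α β₁ β₂ γ₁ γ₂ s t : ℝ}

theorem pdx_a (hst : s ≠ t) : pdx (a β₂ γ₂) s t = (1 - γ₂ + β₂) / (s - t) ^ 2 := by
  have h : HasDerivAt (fun x => a β₂ γ₂ x t) _ s :=
    (hasDerivAt_const s _).fun_div ((hasDerivAt_id' s).sub_const t) (sub_ne_zero.mpr hst)
  rw [pdx, h.deriv]
  ring

theorem pdy_b (hst : s ≠ t) : pdy (b β₂) s t = -(β₂ - 1) / (s - t) ^ 2 := by
  have h : HasDerivAt (fun y => b β₂ s y) _ t :=
    (hasDerivAt_const t _).fun_div ((hasDerivAt_id' t).const_sub s) (sub_ne_zero.mpr hst)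
  rw [pdy, h.deriv]
  ring

theorem pdy_q (ht0 : t ≠ 0) (ht1 : t ≠ 1) :
    pdy q s t = -(s * (s - 1) * (2 * t - 1)) / (t * (t - 1)) ^ 2 := by
  have h : HasDerivAt (fun y => q s y) _ t := (hasDerivAt_const t (s * (s - 1))).fun_div
    hasDerivAt_mul_sub_one (mul_ne_zero ht0 (sub_ne_zero.mpr ht1))
  rw [pdy, h.deriv]
  ring

theorem pdy_m (ht0 : t ≠ 0) (ht1 : t ≠ 1) (hst : s ≠ t) :
    pdy (m α β₁ β₂ γ₁ γ₂) s t =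
      ((-2 * α + 2 * β₂ + γ₁ - 2) * s + (α - β₁ - β₂ + 1)
        - m α β₁ β₂ γ₁ γ₂ s t * ((2 * t - 1) * (s - t) - t * (t - 1)))
        / (t * (t - 1) * (s - t)) := by
  have hnum : HasDerivAt (fun y => (2 * α - γ₁ - 2 * γ₂ + 4) * s ^ 2
      + (-2 * α + 2 * β₂ + γ₁ - 2) * s * y + (-α + β₁ - β₂ + 2 * γ₂ - 3) * s
      + (α - β₁ - β₂ + 1) * y)
      ((-2 * α + 2 * β₂ + γ₁ - 2) * s + (α - β₁ - β₂ + 1)) t :=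
    ((((hasDerivAt_const t _).add ((hasDerivAt_id' t).const_mul _)).add
      (hasDerivAt_const t _)).add ((hasDerivAt_id' t).const_mul _)).congr_deriv (by ring)
  have h : HasDerivAt (fun y => m α β₁ β₂ γ₁ γ₂ s y) _ t :=
    hnum.fun_div hasDerivAt_mul_sub_one_mul_sub (mul_sub_one_mul_sub_ne_zero ht0 ht1 hst)
  rw [pdy, h.deriv, m]
  field_simp

theorem pdx_n (ht0 : t ≠ 0) (ht1 : t ≠ 1) (hst : s ≠ t) :
    pdx (n α β₁ β₂ γ₁ γ₂) s t =
      ((2 * α + 2 * β₂ - γ₁ - 2 * γ₂ + 2) * t + (-α + β₁ - β₂ + γ₂ - 1)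
        - n α β₁ β₂ γ₁ γ₂ s t * (t * (t - 1))) / (t * (t - 1) * (s - t)) := by
  have hnum : HasDerivAt (fun x => (2 * α + 2 * β₂ - γ₁ - 2 * γ₂ + 2) * x * t
      + (-α + β₁ - β₂ + γ₂ - 1) * x + (-2 * α + γ₁ + 2 * γ₂ - 4) * t ^ 2
      + (α - β₁ - β₂ - γ₂ + 3) * t)
      ((2 * α + 2 * β₂ - γ₁ - 2 * γ₂ + 2) * t + (-α + β₁ - β₂ + γ₂ - 1)) s :=
    ((((((hasDerivAt_id' s).const_mul _).mul_const t).add ((hasDerivAt_id' s).const_mul _)).add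
      (hasDerivAt_const s _)).add (hasDerivAt_const s _)).congr_deriv (by ring)
  have h : HasDerivAt (fun x => n α β₁ β₂ γ₁ γ₂ x t) _ s :=
    hnum.fun_div (((hasDerivAt_id' s).sub_const t).const_mul (t * (t - 1)))
      (mul_sub_one_mul_sub_ne_zero ht0 ht1 hst)
  rw [pdx, h.deriv, n]
  field_simp

theorem weingartenPlus_eq_zero (ht0 : t ≠ 0) (ht1 : t ≠ 1) (hst : s ≠ t) :
    weingartenPlus (a β₂ γ₂) q (m α β₁ β₂ γ₁ γ₂) s t = 0 := by
  rw [weingartenPlus, pdx_a hst, pdy_m ht0 ht1 hst, pdy_q ht0 ht1, m, q]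
  field_simp
  ring

theorem weingartenMinus_eq_zero (ht0 : t ≠ 0) (ht1 : t ≠ 1) (hst : s ≠ t) :
    weingartenMinus (b β₂) (n α β₁ β₂ γ₁ γ₂) s t = 0 := by
  rw [weingartenMinus, pdy_b hst, pdx_n ht0 ht1 hst, n]
  field_simp
  ring

end AppellF2

/-- For the conjugate-coordinate system of Appell's `F₂`, the Weingarten invariants
`W⁺ = 2q² a_s - q m_t + m q_t` and `W⁻ = 2 b_t - n_s` both vanish identically for all
parameter values, so both line congruences for `F₂` are W-congruences. -/
theorem F2_W_congruence (α β₁ β₂ γ₁ γ₂ : ℝ) :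
    ∀ s t : ℝ, s ≠ 0 → s ≠ 1 → t ≠ 0 → t ≠ 1 → s ≠ t →
      (let a : ℝ → ℝ → ℝ := fun s' t' => -(1 - γ₂ + β₂) / (s' - t')
       let b : ℝ → ℝ → ℝ := fun s' t' => -(β₂ - 1) / (s' - t')
       let q : ℝ → ℝ → ℝ := fun s' t' => s' * (s' - 1) / (t' * (t' - 1))
       let m : ℝ → ℝ → ℝ := fun s' t' =>
         ((2 * α - γ₁ - 2 * γ₂ + 4) * s' ^ 2 + (-2 * α + 2 * β₂ + γ₁ - 2) * s' * t'
           + (-α + β₁ - β₂ + 2 * γ₂ - 3) * s' + (α - β₁ - β₂ + 1) * t')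
           / (t' * (t' - 1) * (s' - t'))
       let n : ℝ → ℝ → ℝ := fun s' t' =>
         ((2 * α + 2 * β₂ - γ₁ - 2 * γ₂ + 2) * s' * t' + (-α + β₁ - β₂ + γ₂ - 1) * s'
           + (-2 * α + γ₁ + 2 * γ₂ - 4) * t' ^ 2 + (α - β₁ - β₂ - γ₂ + 3) * t')
           / (t' * (t' - 1) * (s' - t'))
       (2 * (q s t) ^ 2 * pdx a s t - q s t * pdy m s t + m s t * pdy q s t = 0) ∧
       (2 * pdy b s t - pdx n s t = 0)) := by
  intro s t _ _ ht0 ht1 hst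
  exact ⟨AppellF2.weingartenPlus_eq_zero ht0 ht1 hst,
    AppellF2.weingartenMinus_eq_zero ht0 ht1 hst⟩
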